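/- arXiv:1708.03119 — 4 statements merged into one kernel-verified Lean document; each statement's English description precedes it below -/
import Mathlib

section
/- In the Drinfeld-Kohno Lie algebra t_{n+1}, for any element a in the Lie subalgebra generated by a_1,…,a_n (where a_i = t_{i(n+1)}), the central element c' = Σ_{1≤i<j≤n} t_{ij} of t_n acts on a by [c', a] = [a, a_1 + ⋯ + a_n]. -/
/-!
The element `c' + (a_1 + ⋯ + a_n)` is the Casimir element `∑_{i < j ≤ n + 1} t i j` of
`t_{n+1}`, and it commutes with every `a_k`: the only terms of `c'` not commuting with `a_k` are
the `t k j` with `j ≠ k`, and each pairs with the term `a_j` of the sum to give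
`⁅t j k + t j (n + 1), t k (n + 1)⁆ = 0`, an instance of the four-term relation. As `ad` of an
element is a derivation, the Casimir element then commutes with the whole Lie subalgebra generated
by the `a_k`, i.e. `⁅c', a⁆ = -⁅a_1 + ⋯ + a_n, a⁆` there.
-/

open Finset

theorem sum_filter_lt_eq_sum_erase {ι M : Type*} [Fintype ι] [LinearOrder ι] [AddCommMonoid M]
    (k : ι) (f : ι → ι → M) (hsymm : ∀ i j, f i j = f j i)
    (hzero : ∀ i j, i ≠ j → i ≠ k → j ≠ k → f i j = 0) :
    ∑ p ∈ univ.filter (fun p : ι × ι => p.1 < p.2), f p.1 p.2 = ∑ j ∈ univ.erase k, f k j := by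
  have hsplit : ∀ i j, (if i < j then f i j else 0) =
      (if i = k then (if k < j then f k j else 0) else 0) +
        (if j = k then (if i < k then f k i else 0) else 0) := by
    intro i j
    by_cases hi : i = k <;> by_cases hj : j = k <;> subst_vars
    · simp
    · simp [hj, hsymm i]
    · simp [hsymm i]
    · simp only [if_neg hi, if_neg hj, add_zero]
      split_ifs with h
      exacts [hzero i j h.ne hi hj, rfl]
  rw [sum_filter, Fintype.sum_prod_type,
    sum_congr rfl fun i _ => sum_congr rfl fun j _ => hsplit i j]
  simp only [sum_add_distrib, sum_ite_irrel, sum_const_zero, sum_ite_eq', mem_univ, if_true]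
  rw [← sum_add_distrib, ← filter_ne', sum_filter]
  refine sum_congr rfl fun j _ => ?_
  rcases lt_trichotomy j k with h | rfl | h
  · simp [h, h.ne, not_lt_of_gt h]
  · simp
  · simp [h, h.ne', not_lt_of_gt h]

theorem LieSubalgebra.lie_eq_zero_of_mem_lieSpan {R L : Type*} [CommRing R] [LieRing L]
    [LieAlgebra R L] {s : Set L} {x : L} (h : ∀ y ∈ s, ⁅x, y⁆ = 0) {a : L}
    (ha : a ∈ lieSpan R L s) : ⁅x, a⁆ = 0 := by
  simpa using LieDerivation.eqOn_lieSpan (D1 := LieDerivation.ad R L x) (D2 := 0)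
    (fun y hy => by simpa using h y hy) ha

section DrinfeldKohno

variable {n : ℕ} {L : Type*} [LieRing L] (t : Fin (n + 1) → Fin (n + 1) → L)

theorem lie_sum_lt_pairs_castSucc (hsymm : ∀ i j, t i j = t j i)
    (hcomm : ∀ i j k l : Fin (n + 1), i ≠ j → k ≠ l → i ≠ k → i ≠ l → j ≠ k → j ≠ l →
      ⁅t i j, t k l⁆ = 0) (k : Fin n) :
    ⁅∑ p ∈ univ.filter (fun p : Fin n × Fin n => p.1 < p.2), t p.1.castSucc p.2.castSucc,
        t k.castSucc (Fin.last n)⁆ =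
      ∑ j ∈ univ.erase k, ⁅t k.castSucc j.castSucc, t k.castSucc (Fin.last n)⁆ := by
  rw [sum_lie]
  refine sum_filter_lt_eq_sum_erase k (fun i j => ⁅t i.castSucc j.castSucc, _⁆)
    (fun i j => by rw [hsymm i.castSucc]) fun i j hij hik hjk => ?_
  exact hcomm _ _ _ _ (by simpa using hij) (Fin.castSucc_lt_last k).ne (by simpa using hik)
    (Fin.castSucc_lt_last i).ne (by simpa using hjk) (Fin.castSucc_lt_last j).ne

theorem lie_sum_last_castSucc (k : Fin n) :
    ⁅∑ i : Fin n, t i.castSucc (Fin.last n), t k.castSucc (Fin.last n)⁆ =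
      ∑ j ∈ univ.erase k, ⁅t j.castSucc (Fin.last n), t k.castSucc (Fin.last n)⁆ := by
  rw [sum_lie, ← add_sum_erase _ _ (mem_univ k), lie_self, zero_add]

theorem lie_sum_lt_pairs_add_sum_last_eq_zero (hsymm : ∀ i j, t i j = t j i)
    (hcomm : ∀ i j k l : Fin (n + 1), i ≠ j → k ≠ l → i ≠ k → i ≠ l → j ≠ k → j ≠ l →
      ⁅t i j, t k l⁆ = 0)
    (hrel : ∀ i j k : Fin (n + 1), i ≠ j → i ≠ k → j ≠ k → ⁅t i j + t i k, t j k⁆ = 0)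
    (k : Fin n) :
    ⁅∑ p ∈ univ.filter (fun p : Fin n × Fin n => p.1 < p.2), t p.1.castSucc p.2.castSucc +
        ∑ i : Fin n, t i.castSucc (Fin.last n), t k.castSucc (Fin.last n)⁆ = 0 := by
  rw [add_lie, lie_sum_lt_pairs_castSucc t hsymm hcomm, lie_sum_last_castSucc,
    ← sum_add_distrib]
  refine sum_eq_zero fun j hj => ?_
  rw [hsymm k.castSucc, ← add_lie]
  exact hrel _ _ _ (by simpa using ne_of_mem_erase hj) (Fin.castSucc_lt_last j).ne
    (Fin.castSucc_lt_last k).ne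

end DrinfeldKohno

/-- In the Drinfeld-Kohno Lie algebra `t_{n+1}`, for any element `a` of the Lie subalgebra
generated by `a_1, …, a_n` (where `a i = t (i.castSucc) (Fin.last n)`), the central element
`c' = ∑_{1 ≤ i < j ≤ n} t i j` of `t_n ⊂ t_{n+1}` acts by
`⁅c', a⁆ = ⁅a, a_1 + ⋯ + a_n⁆`. -/
theorem drinfeld_kohno_c_acts_inner (n : ℕ) (L : Type*) [LieRing L] [LieAlgebra ℂ L]
    (t : Fin (n + 1) → Fin (n + 1) → L)
    (hsymm : ∀ i j, t i j = t j i)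
    (hcomm : ∀ i j k l : Fin (n + 1), i ≠ j → k ≠ l → i ≠ k → i ≠ l → j ≠ k → j ≠ l →
      ⁅t i j, t k l⁆ = 0)
    (hrel : ∀ i j k : Fin (n + 1), i ≠ j → i ≠ k → j ≠ k →
      ⁅t i j + t i k, t j k⁆ = 0) :
    ∀ a ∈ LieSubalgebra.lieSpan ℂ L
        (Set.range fun i : Fin n => t i.castSucc (Fin.last n)),
      ⁅∑ p ∈ Finset.univ.filter (fun p : Fin n × Fin n => p.1 < p.2),
          t p.1.castSucc p.2.castSucc, a⁆
        = ⁅a, ∑ i : Fin n, t i.castSucc (Fin.last n)⁆ := by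
  intro a ha
  have hcasimir := LieSubalgebra.lie_eq_zero_of_mem_lieSpan (by
    rintro _ ⟨k, rfl⟩
    exact lie_sum_lt_pairs_add_sum_last_eq_zero t hsymm hcomm hrel k) ha
  rw [add_lie] at hcasimir
  rw [← lie_skew a]
  exact eq_neg_of_add_eq_zero_left hcasimir
end

section
/- The KZ connection one-form A_KZ = (1/(2πi)) Σ_{i<j} t_{ij} d log(z_i − z_j) on the configuration space of n+1 points in ℂ is flat: dA_KZ + A_KZ ∧ A_KZ = 0. -/
/-!
`dA_KZ = 0` because each `d log (z_i - z_j)` is closed: the second derivative of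
`c / (z_i - z_j)` is symmetric in the two tangent vectors.

For `A_KZ ∧ A_KZ`, expand `⁅A(u), A(v)⁆` over pairs of pairs `{i, j}`, `{k, l}`. Brackets of
disjoint pairs vanish, so only triples `{i, j, k}` contribute. By the Drinfeld–Kohno relations
the brackets `⁅t_ij, t_ik⁆`, `⁅t_jk, t_ji⁆`, `⁅t_ki, t_kj⁆` coincide, so a triple contributes
this common bracket times `ω_ij ∧ ω_ik + ω_jk ∧ ω_ji + ω_ki ∧ ω_kj`, which vanishes by
Arnold's relation.
-/

open Finset

/-- The set of ordered pairs `i < j` in `Fin (n+1)`. -/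
noncomputable def kzPairs (n : ℕ) : Finset (Fin (n + 1) × Fin (n + 1)) :=
  Finset.univ.filter fun p => p.1 < p.2

theorem Finset.sum_sum_eq_two_nsmul_sum_lt {ι M : Type*} [Fintype ι] [LinearOrder ι]
    [AddCommMonoid M] (f : ι → ι → M) (hf : ∀ i j, f i j = f j i) (hf₀ : ∀ i, f i i = 0) :
    ∑ i, ∑ j, f i j = 2 • ∑ p : ι × ι with p.1 < p.2, f p.1 p.2 := by
  have hsplit : ∀ i j, f i j = (if i < j then f i j else 0) + if j < i then f j i else 0 := by
    intro i j
    rcases lt_trichotomy i j with h | rfl | h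
    · simp [h, h.not_gt]
    · simp [hf₀]
    · simp [h, h.not_gt, hf i j]
  simp only [sum_filter, Fintype.sum_prod_type, two_nsmul]
  conv_lhs => enter [2, i, 2, j]; rw [hsplit]
  simp only [sum_add_distrib]
  exact congrArg _ sum_comm

section DrinfeldKohno

variable {ι K L : Type*} [Field K] [LieRing L] [LieAlgebra K L] {t : ι → ι → L}
  {a b : ι → ι → K}

structure IsDrinfeldKohno (t : ι → ι → L) : Prop where
  symm : ∀ i j, t i j = t j i
  lie_eq_zero_of_disjoint :
    ∀ i j k l, i ≠ j → k ≠ l → i ≠ k → i ≠ l → j ≠ k → j ≠ l → ⁅t i j, t k l⁆ = 0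
  lie_add_eq_zero : ∀ i j k, i ≠ j → i ≠ k → j ≠ k → ⁅t i j + t i k, t j k⁆ = 0

/-- `a i j` and `b i j` are the values of 1-forms `ω_ij` on two tangent vectors; this is
`ω_ij ∧ ω_ik + ω_jk ∧ ω_ji + ω_ki ∧ ω_kj = 0` evaluated on them. -/
def ArnoldRelation (a b : ι → ι → K) : Prop :=
  ∀ i j k, i ≠ j → i ≠ k → j ≠ k →
    (a i j * b i k - a i k * b i j) + (a j k * b j i - a j i * b j k)
      + (a k i * b k j - a k j * b k i) = 0

namespace IsDrinfeldKohno

theorem lie_cyclic (ht : IsDrinfeldKohno t) {i j k : ι} (hij : i ≠ j) (hik : i ≠ k)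
    (hjk : j ≠ k) : ⁅t j k, t j i⁆ = ⁅t i j, t i k⁆ := by
  have h₁ := ht.lie_add_eq_zero i j k hij hik hjk
  have h₂ := ht.lie_add_eq_zero j i k hij.symm hjk hik
  rw [add_lie] at h₁ h₂
  rw [ht.symm j i] at h₂ ⊢
  calc ⁅t j k, t i j⁆ = -⁅t i j, t j k⁆ := (lie_skew _ _).symm
    _ = ⁅t i k, t j k⁆ := neg_eq_of_add_eq_zero_right h₁
    _ = -⁅t j k, t i k⁆ := (lie_skew _ _).symm
    _ = ⁅t i j, t i k⁆ := neg_eq_of_add_eq_zero_left h₂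

theorem wedge_smul_lie_cyclic_sum_eq_zero (ht : IsDrinfeldKohno t) (ha₀ : ∀ i, a i i = 0)
    (hb₀ : ∀ i, b i i = 0) (harnold : ArnoldRelation a b) (i j k : ι) :
    (a i j * b i k - a i k * b i j) • ⁅t i j, t i k⁆
      + (a j k * b j i - a j i * b j k) • ⁅t j k, t j i⁆
      + (a k i * b k j - a k j * b k i) • ⁅t k i, t k j⁆ = 0 := by
  rcases eq_or_ne i j with rfl | hij
  · simp [ha₀, hb₀]
  rcases eq_or_ne i k with rfl | hik
  · simp [ha₀, hb₀]
  rcases eq_or_ne j k with rfl | hjk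
  · simp [ha₀, hb₀]
  rw [ht.lie_cyclic hjk hij.symm hik.symm, ht.lie_cyclic hij hik hjk, ← add_smul, ← add_smul,
    harnold i j k hij hik hjk, zero_smul]

/-- Each term of `⁅∑ a_ij t_ij, ∑ b_kl t_kl⁆` is accounted for by the index that `{i, j}` and
`{k, l}` share; the terms with `{i, j} = {k, l}`, counted twice, are zero. -/
theorem smul_lie_eq_ite_add [DecidableEq ι] (ht : IsDrinfeldKohno t) (ha₀ : ∀ i, a i i = 0)
    (hb₀ : ∀ i, b i i = 0) (i j k l : ι) :
    (a i j * b k l) • ⁅t i j, t k l⁆ =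
      ((if k = i then (a i j * b i l) • ⁅t i j, t i l⁆ else 0)
        + if k = j then (a i j * b j l) • ⁅t i j, t j l⁆ else 0)
      + ((if l = i then (a i j * b k i) • ⁅t i j, t k i⁆ else 0)
        + if l = j then (a i j * b k j) • ⁅t i j, t k j⁆ else 0) := by
  have hsymm := ht.symm
  rcases eq_or_ne i j with rfl | hij
  · simp [ha₀]
  rcases eq_or_ne k l with rfl | hkl
  · split_ifs <;> subst_vars <;> simp [hb₀]
  by_cases hmeet : k = i ∨ k = j ∨ l = i ∨ l = j
  · split_ifs <;> subst_vars <;> simp_all [lie_self]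
  · simp only [not_or] at hmeet
    obtain ⟨hki, hkj, hli, hlj⟩ := hmeet
    simp [hki, hkj, hli, hlj, ht.lie_eq_zero_of_disjoint i j k l hij hkl (Ne.symm hki)
      (Ne.symm hli) (Ne.symm hkj) (Ne.symm hlj)]

end IsDrinfeldKohno

variable [Fintype ι]

theorem two_smul_sum_smul_lie_eq_sum_wedge :
    (2 : K) • ∑ i, ∑ j, ∑ k, (a i j * b i k) • ⁅t i j, t i k⁆
      = ∑ i, ∑ j, ∑ k, (a i j * b i k - a i k * b i j) • ⁅t i j, t i k⁆ := by
  have hswap : ∑ i, ∑ j, ∑ k, (a i j * b i k) • ⁅t i j, t i k⁆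
      = -∑ i, ∑ j, ∑ k, (a i k * b i j) • ⁅t i j, t i k⁆ := by
    simp only [← sum_neg_distrib]
    refine sum_congr rfl fun i _ => ?_
    rw [sum_comm]
    refine sum_congr rfl fun j _ => sum_congr rfl fun k _ => ?_
    rw [← lie_skew, smul_neg]
  conv_lhs => rw [two_smul]; enter [2]; rw [hswap]
  simp only [sub_smul, sum_sub_distrib, ← sub_eq_add_neg]

namespace IsDrinfeldKohno

theorem sum_smul_lie_eq_four_smul [DecidableEq ι] (ht : IsDrinfeldKohno t)
    (ha : ∀ i j, a i j = a j i) (hb : ∀ i j, b i j = b j i)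
    (ha₀ : ∀ i, a i i = 0) (hb₀ : ∀ i, b i i = 0) :
    ∑ i, ∑ j, ∑ k, ∑ l, (a i j * b k l) • ⁅t i j, t k l⁆
      = (4 : K) • ∑ i, ∑ j, ∑ k, (a i j * b i k) • ⁅t i j, t i k⁆ := by
  conv_lhs => enter [2, i, 2, j, 2, k, 2, l]; rw [ht.smul_lie_eq_ite_add ha₀ hb₀]
  simp only [sum_add_distrib, sum_ite_irrel, sum_const_zero, sum_ite_eq', mem_univ, if_true]
  have h₂ : ∑ i, ∑ j, ∑ l, (a i j * b j l) • ⁅t i j, t j l⁆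
      = ∑ i, ∑ j, ∑ k, (a i j * b i k) • ⁅t i j, t i k⁆ := by
    rw [sum_comm]
    refine sum_congr rfl fun j _ => sum_congr rfl fun i _ => sum_congr rfl fun k _ => ?_
    rw [ha, ht.symm]
  have h₃ : ∑ i, ∑ j, ∑ k, (a i j * b k i) • ⁅t i j, t k i⁆
      = ∑ i, ∑ j, ∑ k, (a i j * b i k) • ⁅t i j, t i k⁆ :=
    sum_congr rfl fun i _ => sum_congr rfl fun j _ => sum_congr rfl fun k _ => by
      rw [hb k i, ht.symm k i]
  have h₄ : ∑ i, ∑ j, ∑ k, (a i j * b k j) • ⁅t i j, t k j⁆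
      = ∑ i, ∑ j, ∑ k, (a i j * b j k) • ⁅t i j, t j k⁆ :=
    sum_congr rfl fun i _ => sum_congr rfl fun j _ => sum_congr rfl fun k _ => by
      rw [hb k j, ht.symm k j]
  rw [h₄, h₂, h₃]
  module

theorem sum_wedge_smul_lie_eq_zero [CharZero K] (ht : IsDrinfeldKohno t)
    (ha₀ : ∀ i, a i i = 0) (hb₀ : ∀ i, b i i = 0) (harnold : ArnoldRelation a b) :
    ∑ i, ∑ j, ∑ k, (a i j * b i k - a i k * b i j) • ⁅t i j, t i k⁆ = 0 := by
  set g : ι → ι → ι → L := fun i j k => (a i j * b i k - a i k * b i j) • ⁅t i j, t i k⁆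
  have hcycle₁ : ∑ i, ∑ j, ∑ k, g j k i = ∑ i, ∑ j, ∑ k, g i j k :=
    sum_comm.trans (sum_congr rfl fun _ _ => sum_comm)
  have hcycle₂ : ∑ i, ∑ j, ∑ k, g k i j = ∑ i, ∑ j, ∑ k, g i j k :=
    (sum_congr rfl fun _ _ => sum_comm).trans sum_comm
  have h₃ : (3 : K) • ∑ i, ∑ j, ∑ k, g i j k = 0 := by
    calc (3 : K) • ∑ i, ∑ j, ∑ k, g i j k
        = ∑ i, ∑ j, ∑ k, (g i j k + g j k i + g k i j) := by
          simp only [sum_add_distrib, hcycle₁, hcycle₂]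
          module
      _ = 0 := by
          simp only [g, ht.wedge_smul_lie_cyclic_sum_eq_zero ha₀ hb₀ harnold, sum_const_zero]
  simpa using h₃

theorem sum_smul_lie_eq_zero [CharZero K] (ht : IsDrinfeldKohno t) (ha₀ : ∀ i, a i i = 0)
    (hb₀ : ∀ i, b i i = 0) (harnold : ArnoldRelation a b) :
    ∑ i, ∑ j, ∑ k, (a i j * b i k) • ⁅t i j, t i k⁆ = 0 := by
  have h₂ := two_smul_sum_smul_lie_eq_sum_wedge.trans
    (ht.sum_wedge_smul_lie_eq_zero ha₀ hb₀ harnold)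
  simpa using h₂

theorem lie_sum_lt_smul_eq_zero [LinearOrder ι] [CharZero K] (ht : IsDrinfeldKohno t)
    (ha : ∀ i j, a i j = a j i) (hb : ∀ i j, b i j = b j i)
    (ha₀ : ∀ i, a i i = 0) (hb₀ : ∀ i, b i i = 0) (harnold : ArnoldRelation a b) :
    ⁅∑ p : ι × ι with p.1 < p.2, a p.1 p.2 • t p.1 p.2,
      ∑ p : ι × ι with p.1 < p.2, b p.1 p.2 • t p.1 p.2⁆ = 0 := by
  classical
  have hdouble : ∀ c : ι → ι → K, (∀ i j, c i j = c j i) → (∀ i, c i i = 0) →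
      ∑ i, ∑ j, c i j • t i j = (2 : K) • ∑ p : ι × ι with p.1 < p.2, c p.1 p.2 • t p.1 p.2 :=
    fun c hc hc₀ => by
      rw [ofNat_smul_eq_nsmul]
      exact sum_sum_eq_two_nsmul_sum_lt _ (fun i j => by rw [hc, ht.symm]) (by simp [hc₀])
  have h₄ : (4 : K) • ⁅∑ p : ι × ι with p.1 < p.2, a p.1 p.2 • t p.1 p.2,
      ∑ p : ι × ι with p.1 < p.2, b p.1 p.2 • t p.1 p.2⁆ = 0 := by
    calc _ = ⁅∑ i, ∑ j, a i j • t i j, ∑ k, ∑ l, b k l • t k l⁆ := by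
          rw [hdouble a ha ha₀, hdouble b hb hb₀, smul_lie, lie_smul, smul_smul]
          norm_num
      _ = ∑ i, ∑ j, ∑ k, ∑ l, (a i j * b k l) • ⁅t i j, t k l⁆ := by
          simp only [sum_lie]
          simp only [lie_sum, smul_lie, lie_smul, smul_smul, mul_comm (b _ _)]
      _ = 0 := by
          rw [ht.sum_smul_lie_eq_four_smul ha hb ha₀ hb₀,
            ht.sum_smul_lie_eq_zero ha₀ hb₀ harnold, smul_zero]
  simpa using h₄

end IsDrinfeldKohno

end DrinfeldKohno

section LogarithmicForms

variable {ι K : Type*} [Field K]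

/-- `d log (z i - z j)` at the point `z`, evaluated on the tangent vector `u`. -/
def dlogSub (z : ι → K) (i j : ι) (u : ι → K) : K :=
  (u i - u j) / (z i - z j)

theorem dlogSub_comm (z : ι → K) (i j : ι) (u : ι → K) : dlogSub z i j u = dlogSub z j i u := by
  rw [dlogSub, dlogSub, ← neg_sub (u j), ← neg_sub (z j), neg_div_neg_eq]

theorem dlogSub_self (z : ι → K) (i : ι) (u : ι → K) : dlogSub z i i u = 0 := by
  simp [dlogSub]

theorem arnoldRelation_dlogSub {z : ι → K} (hz : Function.Injective z) (u v : ι → K) :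
    ArnoldRelation (dlogSub z · · u) (dlogSub z · · v) := by
  intro i j k hij hik hjk
  have := sub_ne_zero.mpr (hz.ne hij)
  have := sub_ne_zero.mpr (hz.ne hik)
  have := sub_ne_zero.mpr (hz.ne hjk)
  have := sub_ne_zero.mpr (hz.ne hij.symm)
  have := sub_ne_zero.mpr (hz.ne hik.symm)
  have := sub_ne_zero.mpr (hz.ne hjk.symm)
  simp only [dlogSub]
  field_simp
  ring

end LogarithmicForms

theorem fderiv_const_div_sub_apply {𝕜 ι : Type*} [NontriviallyNormedField 𝕜] [Fintype ι]
    (c : 𝕜) {i j : ι} {z : ι → 𝕜} (h : z i ≠ z j) (u : ι → 𝕜) :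
    fderiv 𝕜 (fun w : ι → 𝕜 => c / (w i - w j)) z u = -(c * (u i - u j)) / (z i - z j) ^ 2 := by
  have hsub : HasFDerivAt (fun w : ι → 𝕜 => w i - w j) _ z :=
    (hasFDerivAt_apply (𝕜 := 𝕜) (F' := fun _ : ι => 𝕜) i z).sub (hasFDerivAt_apply j z)
  have hdiv := ((hasDerivAt_inv (sub_ne_zero.mpr h)).const_mul c).comp_hasFDerivAt z hsub
  simp only [div_eq_mul_inv]
  rw [← Function.comp_def (fun y => c * y⁻¹), hdiv.fderiv]
  simp
  field_simp

theorem fderiv_div_sub_apply_comm {𝕜 ι : Type*} [NontriviallyNormedField 𝕜] [Fintype ι]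
    {i j : ι} {z : ι → 𝕜} (h : z i ≠ z j) (u v : ι → 𝕜) :
    fderiv 𝕜 (fun w : ι → 𝕜 => (v i - v j) / (w i - w j)) z u
      = fderiv 𝕜 (fun w : ι → 𝕜 => (u i - u j) / (w i - w j)) z v := by
  rw [fderiv_const_div_sub_apply _ h, fderiv_const_div_sub_apply _ h, mul_comm]

/-- The curvature is evaluated at the configuration `z` on the tangent vectors `u, v`: the first
summand is `dA_KZ(u, v)`, the second `⁅A_KZ(u), A_KZ(v)⁆ = (A_KZ ∧ A_KZ)(u, v)`. -/
theorem kz_connection_flat (n : ℕ) (L : Type*) [LieRing L] [LieAlgebra ℂ L]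
    (t : Fin (n + 1) → Fin (n + 1) → L)
    (hsymm : ∀ i j, t i j = t j i)
    (hcomm : ∀ i j k l : Fin (n + 1), i ≠ j → k ≠ l → i ≠ k → i ≠ l → j ≠ k → j ≠ l →
      ⁅t i j, t k l⁆ = 0)
    (hrel : ∀ i j k : Fin (n + 1), i ≠ j → i ≠ k → j ≠ k →
      ⁅t i j + t i k, t j k⁆ = 0)
    (z : Fin (n + 1) → ℂ) (hz : Function.Injective z) (u v : Fin (n + 1) → ℂ) :
    ((2 * (Real.pi : ℂ) * Complex.I)⁻¹ •
        ∑ p ∈ kzPairs n,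
          (fderiv ℂ (fun w : Fin (n + 1) → ℂ => (v p.1 - v p.2) / (w p.1 - w p.2)) z u
            - fderiv ℂ (fun w : Fin (n + 1) → ℂ => (u p.1 - u p.2) / (w p.1 - w p.2)) z v)
            • t p.1 p.2)
      + ⁅(2 * (Real.pi : ℂ) * Complex.I)⁻¹ •
            ∑ p ∈ kzPairs n, ((u p.1 - u p.2) / (z p.1 - z p.2)) • t p.1 p.2,
          (2 * (Real.pi : ℂ) * Complex.I)⁻¹ •
            ∑ p ∈ kzPairs n, ((v p.1 - v p.2) / (z p.1 - z p.2)) • t p.1 p.2⁆ = 0 := by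
  have hdA : ∑ p ∈ kzPairs n,
      (fderiv ℂ (fun w : Fin (n + 1) → ℂ => (v p.1 - v p.2) / (w p.1 - w p.2)) z u
        - fderiv ℂ (fun w : Fin (n + 1) → ℂ => (u p.1 - u p.2) / (w p.1 - w p.2)) z v)
        • t p.1 p.2 = 0 :=
    sum_eq_zero fun p hp => by
      rw [fderiv_div_sub_apply_comm (hz.ne (mem_filter.mp hp).2.ne), sub_self, zero_smul]
  have hAA : ⁅∑ p ∈ kzPairs n, ((u p.1 - u p.2) / (z p.1 - z p.2)) • t p.1 p.2,
      ∑ p ∈ kzPairs n, ((v p.1 - v p.2) / (z p.1 - z p.2)) • t p.1 p.2⁆ = 0 :=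
    IsDrinfeldKohno.lie_sum_lt_smul_eq_zero ⟨hsymm, hcomm, hrel⟩
      (dlogSub_comm z · · u) (dlogSub_comm z · · v) (dlogSub_self z · u) (dlogSub_self z · v)
      (arnoldRelation_dlogSub hz u v)
  rw [hdA, smul_zero, zero_add, smul_lie, lie_smul, hAA, smul_zero, smul_zero]
end

section
/- The Arnold identity holds: for pairwise distinct complex variables z_i, z_j, z_k, one has d log(z_i−z_j) ∧ d log(z_j−z_k) + d log(z_j−z_k) ∧ d log(z_k−z_i) + d log(z_k−z_i) ∧ d log(z_i−z_j) = 0 as a 2-form on the configuration space. -/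
/-!
Put `a = z₀ - z₁`, `b = z₁ - z₂`, `c = z₂ - z₀`, and let `p, q, r` and `p', q', r'` be the same
differences of the tangent vectors `u` and `v`. All three triples sum to zero. For the two
tangent triples this makes the three cyclic `2 × 2` minors equal to one value `Δ`, so the cyclic
sum of wedges is `Δ (1/(ab) + 1/(bc) + 1/(ca)) = Δ (a + b + c)/(abc) = 0`.
-/

/-- The 1-form `d log (z_a - z_b)` on the configuration space of 3 points in `ℂ`,
evaluated at the configuration `z` on the tangent vector `w`. -/
noncomputable def dlog (z : Fin 3 → ℂ) (a b : Fin 3) (w : Fin 3 → ℂ) : ℂ :=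
  (w a - w b) / (z a - z b)

/-- The wedge product of two 1-forms evaluated on tangent vectors `u, v`. -/
noncomputable def wedge (α β : (Fin 3 → ℂ) → ℂ) (u v : Fin 3 → ℂ) : ℂ :=
  α u * β v - α v * β u

section CyclicSums

variable {K : Type*}

theorem cyclic_minors_eq [CommRing K] {p q r p' q' r' : K} (h : p + q + r = 0)
    (h' : p' + q' + r' = 0) :
    q * r' - r * q' = p * q' - q * p' ∧ r * p' - p * r' = p * q' - q * p' :=
  ⟨by linear_combination q * h' - q' * h, by linear_combination p' * h - p * h'⟩

theorem inv_mul_add_inv_mul_add_inv_mul_eq_zero [Field K] {a b c : K} (ha : a ≠ 0) (hb : b ≠ 0)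
    (hc : c ≠ 0) (h : a + b + c = 0) : (a * b)⁻¹ + (b * c)⁻¹ + (c * a)⁻¹ = 0 := by
  field_simp
  linear_combination h

theorem cyclic_sum_div_wedge_eq_zero [Field K] {a b c p q r p' q' r' : K} (ha : a ≠ 0)
    (hb : b ≠ 0) (hc : c ≠ 0) (h : a + b + c = 0) (hpqr : p + q + r = 0)
    (hpqr' : p' + q' + r' = 0) :
    p / a * (q' / b) - p' / a * (q / b) + (q / b * (r' / c) - q' / b * (r / c))
      + (r / c * (p' / a) - r' / c * (p / a)) = 0 := by
  obtain ⟨hqr, hrp⟩ := cyclic_minors_eq hpqr hpqr'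
  calc _ = (p * q' - q * p') * (a * b)⁻¹ + (q * r' - r * q') * (b * c)⁻¹
        + (r * p' - p * r') * (c * a)⁻¹ := by ring
    _ = (p * q' - q * p') * ((a * b)⁻¹ + (b * c)⁻¹ + (c * a)⁻¹) := by rw [hqr, hrp]; ring
    _ = 0 := by rw [inv_mul_add_inv_mul_add_inv_mul_eq_zero ha hb hc h, mul_zero]

end CyclicSums

/-- The Arnold identity: for pairwise distinct `z_i, z_j, z_k` (here `i,j,k = 0,1,2`),
`d log(z_i−z_j) ∧ d log(z_j−z_k) + d log(z_j−z_k) ∧ d log(z_k−z_i)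
  + d log(z_k−z_i) ∧ d log(z_i−z_j) = 0` as a 2-form on the configuration space. -/
theorem arnold_identity (z : Fin 3 → ℂ) (hz : Function.Injective z) (u v : Fin 3 → ℂ) :
    wedge (dlog z 0 1) (dlog z 1 2) u v
      + wedge (dlog z 1 2) (dlog z 2 0) u v
      + wedge (dlog z 2 0) (dlog z 0 1) u v = 0 := by
  have hsub {i j : Fin 3} (hij : i ≠ j) : z i - z j ≠ 0 := sub_ne_zero.2 (hz.ne hij)
  simp only [wedge, dlog]
  exact cyclic_sum_div_wedge_eq_zero (hsub (by decide)) (hsub (by decide)) (hsub (by decide))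
    (by ring) (by ring) (by ring)
end

section
/- Let {−,−} be the Kirillov-Kostant-Souriau double bracket on the tensor algebra T(H₁) over generators a_1,…,a_n, determined by {a_i, a_j} = δ_{ij}(1⊗a_i − a_i⊗1). Then for the 1-forms A(z) = (1/(2πi)) Σ_i a_i d log(z−z_i) and A(w), one has {A(z), A(w)} = (1/(2πi)) (1 ∧ (A(z)−A(w))) d log(z−w), where 1 ∧ x denotes 1⊗x − x⊗1. -/
open TensorProduct

/-- The constant `1/(2πi)`. -/
noncomputable def c2πi : ℂ := (2 * (Real.pi : ℂ) * Complex.I)⁻¹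

theorem Finset.sum_sum_smul_of_eq_ite {ι R M : Type*} [Fintype ι] [DecidableEq ι]
    [AddCommMonoid M] [SMulZeroClass R M] (c : ι → ι → R) (f : ι → ι → M) (x : ι → M)
    (hf : ∀ i j, f i j = if i = j then x i else 0) :
    ∑ i, ∑ j, c i j • f i j = ∑ i, c i i • x i := by
  simp only [hf, smul_ite, smul_zero, Finset.sum_ite_eq, Finset.mem_univ, if_true]

/-- `d log(z−a) ∧ d log(w−a) = (d log(z−a) − d log(w−a)) ∧ d log(z−w)`, evaluated on the
tangent vectors `(x₀, x₁)` and `(y₀, y₁)`. -/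
theorem dlog_wedge_dlog_eq {K : Type*} [Field K] {a z w : K} (hza : z ≠ a) (hwa : w ≠ a)
    (hzw : z ≠ w) (x₀ x₁ y₀ y₁ : K) :
    x₀ / (z - a) * (y₁ / (w - a)) - y₀ / (z - a) * (x₁ / (w - a))
      = (x₀ / (z - a) - x₁ / (w - a)) * ((y₀ - y₁) / (z - w))
        - (y₀ / (z - a) - y₁ / (w - a)) * ((x₀ - x₁) / (z - w)) := by
  have hza' : z - a ≠ 0 := sub_ne_zero.mpr hza
  have hwa' : w - a ≠ 0 := sub_ne_zero.mpr hwa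
  have hzw' : z - w ≠ 0 := sub_ne_zero.mpr hzw
  field_simp
  ring

/-- Both sides are `T(H₁)⊗T(H₁)`-valued 2-forms in the coordinates `(z, w)`, evaluated on the
tangent vectors `u, v ∈ ℂ²` (`u 0` the `dz`-component, `u 1` the `dw`-component). -/
theorem kks_double_bracket_of_forms_general (n : ℕ) (zs : Fin n → ℂ)
    (db : FreeAlgebra ℂ (Fin n) →ₗ[ℂ] FreeAlgebra ℂ (Fin n) →ₗ[ℂ]
      TensorProduct ℂ (FreeAlgebra ℂ (Fin n)) (FreeAlgebra ℂ (Fin n)))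
    (hdb : ∀ i j, db (FreeAlgebra.ι ℂ i) (FreeAlgebra.ι ℂ j) =
      if i = j then
        (1 : FreeAlgebra ℂ (Fin n)) ⊗ₜ[ℂ] FreeAlgebra.ι ℂ i
          - FreeAlgebra.ι ℂ i ⊗ₜ[ℂ] (1 : FreeAlgebra ℂ (Fin n))
      else 0)
    (z w : ℂ) (hzw : z ≠ w) (hz : ∀ i, z ≠ zs i) (hw : ∀ i, w ≠ zs i)
    (u v : Fin 2 → ℂ) :
    ∑ i : Fin n, ∑ j : Fin n,
      ((c2πi * (u 0 / (z - zs i))) * (c2πi * (v 1 / (w - zs j)))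
          - (c2πi * (v 0 / (z - zs i))) * (c2πi * (u 1 / (w - zs j))))
        • db (FreeAlgebra.ι ℂ i) (FreeAlgebra.ι ℂ j)
    = c2πi • ∑ i : Fin n,
        ((c2πi * (u 0 / (z - zs i)) - c2πi * (u 1 / (w - zs i))) * ((v 0 - v 1) / (z - w))
            - (c2πi * (v 0 / (z - zs i)) - c2πi * (v 1 / (w - zs i))) * ((u 0 - u 1) / (z - w)))
          • ((1 : FreeAlgebra ℂ (Fin n)) ⊗ₜ[ℂ] FreeAlgebra.ι ℂ i
              - FreeAlgebra.ι ℂ i ⊗ₜ[ℂ] (1 : FreeAlgebra ℂ (Fin n))) := by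
  rw [Finset.sum_sum_smul_of_eq_ite _ _ _ hdb, Finset.smul_sum]
  refine Finset.sum_congr rfl fun i _ => ?_
  rw [smul_smul]
  congr 1
  linear_combination c2πi ^ 2 * dlog_wedge_dlog_eq (hz i) (hw i) hzw (u 0) (u 1) (v 0) (v 1)

/-- Let `{−,−}` (here `db`) be the KKS double bracket on the tensor algebra
`T(H₁) = ℂ⟨a_1,…,a_n⟩`, with `{a_i,a_j} = δ_{ij}(1⊗a_i − a_i⊗1)`. Then for the 1-forms
`A(z) = (1/2πi) ∑_i a_i d log(z−z_i)` and `A(w)` one has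
`{A(z), A(w)} = (1/2πi)(1 ∧ (A(z)−A(w))) d log(z−w)` where `1 ∧ x = 1⊗x − x⊗1`.
Both sides are 2-forms on `(ℂ∖{z_1,…,z_n})² ∖ diagonal` (coordinates `z, w`), valued in
`T(H₁)⊗T(H₁)`, evaluated on tangent vectors `u, v ∈ ℂ²` (`u 0` the `dz`-component,
`u 1` the `dw`-component), with products of 1-forms interpreted as wedge products. -/
theorem kks_double_bracket_of_forms (n : ℕ) (zs : Fin n → ℂ) (hzs : Function.Injective zs)
    (db : FreeAlgebra ℂ (Fin n) →ₗ[ℂ] FreeAlgebra ℂ (Fin n) →ₗ[ℂ]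
      TensorProduct ℂ (FreeAlgebra ℂ (Fin n)) (FreeAlgebra ℂ (Fin n)))
    (hdb : ∀ i j, db (FreeAlgebra.ι ℂ i) (FreeAlgebra.ι ℂ j) =
      if i = j then
        (1 : FreeAlgebra ℂ (Fin n)) ⊗ₜ[ℂ] FreeAlgebra.ι ℂ i
          - FreeAlgebra.ι ℂ i ⊗ₜ[ℂ] (1 : FreeAlgebra ℂ (Fin n))
      else 0)
    (z w : ℂ) (hzw : z ≠ w) (hz : ∀ i, z ≠ zs i) (hw : ∀ i, w ≠ zs i)
    (u v : Fin 2 → ℂ) :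
    ∑ i : Fin n, ∑ j : Fin n,
      ((c2πi * (u 0 / (z - zs i))) * (c2πi * (v 1 / (w - zs j)))
          - (c2πi * (v 0 / (z - zs i))) * (c2πi * (u 1 / (w - zs j))))
        • db (FreeAlgebra.ι ℂ i) (FreeAlgebra.ι ℂ j)
    = c2πi • ∑ i : Fin n,
        ((c2πi * (u 0 / (z - zs i)) - c2πi * (u 1 / (w - zs i))) * ((v 0 - v 1) / (z - w))
            - (c2πi * (v 0 / (z - zs i)) - c2πi * (v 1 / (w - zs i))) * ((u 0 - u 1) / (z - w)))
          • ((1 : FreeAlgebra ℂ (Fin n)) ⊗ₜ[ℂ] FreeAlgebra.ι ℂ i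
              - FreeAlgebra.ι ℂ i ⊗ₜ[ℂ] (1 : FreeAlgebra ℂ (Fin n))) :=
  kks_double_bracket_of_forms_general n zs db hdb z w hzw hz hw u v
end
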